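/- arXiv:math/0209001 — 3 statements merged into one kernel-verified Lean document; each statement's English description precedes it below -/
import Mathlib

section
/- Let W = ⊕_{i∈I} F_i be a direct sum of finite field extensions of F and L : W → End_F(W) the map sending w to componentwise left multiplication. If a = (a_i) with each a_i generating F_i over F and the minimal polynomials of the a_i pairwise coprime, then the centralizer of L(a) in End_F(W) is exactly L(W). -/
/-- Componentwise left multiplication by `w` on `W = ⊕_{i ∈ I} F_i`, as an
`F`-linear endomorphism. -/
noncomputable def mulEnd {F : Type*} [Field F] {I : Type*} (K : I → Type*)
    [∀ i, Field (K i)] [∀ i, Algebra F (K i)] (w : ∀ i, K i) :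
    Module.End F (∀ i, K i) :=
  LinearMap.pi fun i => (LinearMap.mul F (K i) (w i)).comp (LinearMap.proj i)

lemma mulEnd_apply {F : Type*} [Field F] {I : Type*} (K : I → Type*)
    [∀ i, Field (K i)] [∀ i, Algebra F (K i)] (w v : ∀ i, K i) (i : I) :
    mulEnd (F := F) K w v i = w i * v i := rfl

/-- `mulEnd` as an algebra homomorphism. -/
noncomputable def mulEndHom (F : Type*) [Field F] {I : Type*} (K : I → Type*)
    [∀ i, Field (K i)] [∀ i, Algebra F (K i)] :
    (∀ i, K i) →ₐ[F] Module.End F (∀ i, K i) where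
  toFun := mulEnd K
  map_one' := by ext v i; simp [mulEnd]
  map_mul' x y := by
    ext v i
    simp [mulEnd, Module.End.mul_apply, mul_assoc]
  map_zero' := by ext v i; simp [mulEnd]
  map_add' x y := by ext v i; simp [mulEnd, add_mul]
  commutes' c := by
    ext v i
    simp [mulEnd, Module.algebraMap_end_apply, Algebra.smul_def]

lemma aeval_pi_apply {F : Type*} [Field F] {I : Type*} (K : I → Type*)
    [∀ i, Field (K i)] [∀ i, Algebra F (K i)] (a : ∀ i, K i) (p : Polynomial F) (j : I) :
    Polynomial.aeval a p j = Polynomial.aeval (a j) p := by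
  rw [show a j = Pi.evalAlgHom F K j a from rfl, Polynomial.aeval_algHom_apply]
  rfl

lemma adjoin_pi_top {F : Type*} [Field F] {I : Type*} [Fintype I]
    (K : I → Type*) [∀ i, Field (K i)] [∀ i, Algebra F (K i)]
    (a : ∀ i, K i) (hgen : ∀ i, Algebra.adjoin F {a i} = ⊤)
    (hcop : ∀ i j, i ≠ j → IsCoprime (minpoly F (a i)) (minpoly F (a j))) :
    Algebra.adjoin F ({a} : Set (∀ i, K i)) = ⊤ := by
  classical
  rw [eq_top_iff]
  intro v _
  have key : ∀ i, Pi.single i (v i) ∈ Algebra.adjoin F ({a} : Set (∀ i, K i)) := by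
    intro i
    have hcp : IsCoprime (minpoly F (a i))
        (∏ j ∈ Finset.univ.erase i, minpoly F (a j)) :=
      IsCoprime.prod_right fun j hj =>
        hcop i j (Ne.symm (Finset.ne_of_mem_erase hj))
    obtain ⟨u, w, huw⟩ := hcp
    obtain ⟨q, hq⟩ : ∃ q, Polynomial.aeval (a i) q = v i := by
      have h1 : v i ∈ Algebra.adjoin F ({a i} : Set (K i)) := by
        rw [hgen i]; trivial
      rwa [Algebra.adjoin_singleton_eq_range_aeval] at h1
    have heval : Polynomial.aeval a
        (q * (w * ∏ j ∈ Finset.univ.erase i, minpoly F (a j))) = Pi.single i (v i) := by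
      funext j
      rw [aeval_pi_apply]
      by_cases hji : j = i
      · subst hji
        have h2 : Polynomial.aeval (a j)
            (w * ∏ k ∈ Finset.univ.erase j, minpoly F (a k)) = 1 := by
          have := congrArg (Polynomial.aeval (a j)) huw
          simpa [minpoly.aeval] using this
        simp [map_mul, h2, hq, Pi.single_eq_same]
      · have h0 : Polynomial.aeval (a j)
            (∏ k ∈ Finset.univ.erase i, minpoly F (a k)) = 0 := by
          rw [map_prod]
          exact Finset.prod_eq_zero (Finset.mem_erase.mpr ⟨hji, Finset.mem_univ j⟩)
            (minpoly.aeval F (a j))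
        simp [map_mul, h0, Pi.single_eq_of_ne hji]
    rw [Algebra.adjoin_singleton_eq_range_aeval]
    exact ⟨q * (w * ∏ j ∈ Finset.univ.erase i, minpoly F (a j)), heval⟩
  have hv : v = ∑ i, Pi.single i (v i) := (Finset.univ_sum_single v).symm
  rw [hv]
  exact Subalgebra.sum_mem _ fun i _ => key i

/-- Let `W = ⊕_{i ∈ I} F_i` be a finite direct sum of finite field extensions of `F`,
and `L : W → End_F(W)` componentwise left multiplication.  If `a = (aᵢ)` with each
`aᵢ` generating `Fᵢ` over `F` and the minimal polynomials of the `aᵢ` pairwise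
coprime, then the centralizer of `L(a)` in `End_F(W)` is exactly `L(W)`. -/
theorem centralizer_of_mulEnd {F : Type*} [Field F] {I : Type*} [Fintype I]
    (K : I → Type*) [∀ i, Field (K i)] [∀ i, Algebra F (K i)]
    [∀ i, FiniteDimensional F (K i)]
    (a : ∀ i, K i) (hgen : ∀ i, Algebra.adjoin F {a i} = ⊤)
    (hcop : ∀ i j, i ≠ j → IsCoprime (minpoly F (a i)) (minpoly F (a j))) :
    ∀ T : Module.End F (∀ i, K i),
      T ∘ₗ mulEnd K a = mulEnd K a ∘ₗ T ↔ ∃ w, T = mulEnd K w := by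
  intro T
  constructor
  · intro hT
    set S : Subalgebra F (∀ i, K i) :=
      (Subalgebra.centralizer F ({T} : Set (Module.End F (∀ i, K i)))).comap
        (mulEndHom F K) with hS
    have haS : a ∈ S := by
      intro g hg
      rcases hg with rfl
      show g * mulEndHom F K a = mulEndHom F K a * g
      exact hT
    have htop : ∀ x : ∀ i, K i, x ∈ S := by
      have hle : Algebra.adjoin F ({a} : Set (∀ i, K i)) ≤ S :=
        Algebra.adjoin_le (Set.singleton_subset_iff.mpr haS)
      rw [adjoin_pi_top K a hgen hcop] at hle
      exact fun x => hle trivial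
    refine ⟨T 1, ?_⟩
    apply LinearMap.ext
    intro v
    have hcomm : T * mulEndHom F K v = mulEndHom F K v * T := htop v T rfl
    have h1 : T (mulEnd (F := F) K v 1) = mulEnd (F := F) K v (T 1) := by
      have := congrArg (fun f : Module.End F (∀ i, K i) => f 1) hcomm
      simpa [Module.End.mul_apply, mulEndHom] using this
    have hv1 : mulEnd (F := F) K v 1 = v := by funext i; simp [mulEnd_apply]
    rw [hv1] at h1
    rw [h1]
    funext i
    simp [mulEnd_apply, mul_comm]
  · rintro ⟨w, rfl⟩
    apply LinearMap.ext
    intro v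
    funext i
    simp [LinearMap.comp_apply, mulEnd_apply, mul_left_comm]
end

section
/- With J_{2m} denoting the even orthogonal form matrix defined by (J_{2m})_{ij} = (−1)^{i+1}/2 if i+j = 2m+1 and i<j, (−1)^{j+1}/2 if i+j=2m+1 and j<i, and 0 otherwise, and ψ : so(2a)⊕so(2b) → so(2a+2b) the block embedding placing A in the middle block and B in the corners, one has J_{2a+2b} = ψ((−1)^b J_{2a}, J_{2b}). -/
open Matrix

/-- The even orthogonal form matrix `J_{2m}` (Waldspurger's normalization), with
(1-based) entries `(−1)^{i+1}/2` if `i+j = 2m+1`, `i < j`; `(−1)^{j+1}/2` if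
`i+j = 2m+1`, `j < i`; and `0` otherwise. -/
def Jmat (F : Type*) [Field F] (m : ℕ) : Matrix (Fin (2 * m)) (Fin (2 * m)) F :=
  Matrix.of fun i j =>
    if (i : ℕ) + (j : ℕ) = 2 * m - 1 then
      (if (i : ℕ) < (j : ℕ) then (-1 : F) ^ (i : ℕ) / 2 else (-1 : F) ^ (j : ℕ) / 2)
    else 0

/-- The block embedding `ψ : so(2a) ⊕ so(2b) → so(2a+2b)` placing `A` in the middle
`2a × 2a` block and the four `b × b` blocks of `B` at the corners. -/
def psi {F : Type*} [Field F] (a b : ℕ)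
    (A : Matrix (Fin (2 * a)) (Fin (2 * a)) F)
    (B : Matrix (Fin (2 * b)) (Fin (2 * b)) F) :
    Matrix (Fin (2 * a + 2 * b)) (Fin (2 * a + 2 * b)) F :=
  Matrix.of fun i j =>
    if hi : b ≤ (i : ℕ) ∧ (i : ℕ) < b + 2 * a then
      if hj : b ≤ (j : ℕ) ∧ (j : ℕ) < b + 2 * a then
        A ⟨(i : ℕ) - b, by omega⟩ ⟨(j : ℕ) - b, by omega⟩
      else 0
    else
      if hj : b ≤ (j : ℕ) ∧ (j : ℕ) < b + 2 * a then 0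
      else
        B ⟨if (i : ℕ) < b then (i : ℕ) else (i : ℕ) - 2 * a,
            by have := i.isLt; split_ifs <;> omega⟩
          ⟨if (j : ℕ) < b then (j : ℕ) else (j : ℕ) - 2 * a,
            by have := j.isLt; split_ifs <;> omega⟩

/-- `J_{2a+2b} = ψ((−1)^b J_{2a}, J_{2b})`. -/
theorem Jmat_eq_psi (F : Type*) [Field F] (a b : ℕ) :
    Jmat F (a + b)
      = Matrix.reindex (finCongr (by ring)) (finCongr (by ring))
          (psi a b ((-1 : F) ^ b • Jmat F a) (Jmat F b)) := by
  ext i j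
  have hi := i.isLt; have hj := j.isLt
  simp only [Matrix.reindex_apply, Matrix.submatrix_apply, finCongr_symm, finCongr_apply,
    Jmat, psi, Matrix.of_apply, Fin.coe_cast, Matrix.smul_apply, smul_eq_mul]
  split_ifs <;> first
    | omega
    | rfl
    | simp
    | (rw [mul_div_assoc', ← pow_add]; congr 2; omega)
end

section
/- Let F be a field of characteristic ≠ 2 and let θ(X) = pf(J X) on so(2m,F). With the block embedding ψ : so(2a,F) ⊕ so(2b,F) → so(2a+2b,F) as above, θ(ψ(A,B)) = (−1)^{ab} · θ(A) · θ(B). -/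
open Matrix

/-- The index `2*i + k` in `Fin (2*n)`. -/
def pairIdx (n : ℕ) (i : Fin n) (k : Fin 2) : Fin (2 * n) :=
  ⟨2 * i.val + k.val, by omega⟩

/-- The Pfaffian of a (skew-symmetric) `2n × 2n` matrix, defined as the sum over
perfect matchings of signed products of entries.  It satisfies `pf M ^ 2 = det M`
and `pf J = 1` for the standard symplectic matrix `J`. -/
noncomputable def pf {R : Type*} [CommRing R] {n : ℕ}
    (A : Matrix (Fin (2 * n)) (Fin (2 * n)) R) : R :=
  ∑ σ ∈ Finset.univ.filter (fun σ : Equiv.Perm (Fin (2 * n)) =>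
      (∀ i : Fin n, (σ (pairIdx n i 0)).val < (σ (pairIdx n i 1)).val) ∧
      (∀ i j : Fin n, i < j → (σ (pairIdx n i 0)).val < (σ (pairIdx n j 0)).val)),
    (Equiv.Perm.sign σ : ℤ) • ∏ i : Fin n, A (σ (pairIdx n i 0)) (σ (pairIdx n i 1))

/-!
The Pfaffian of a skew matrix `M` changes by `sign τ` under `M ↦ M.submatrix τ τ`. Indeed each term
of `pf M` depends only on its permutation modulo the stabiliser of the standard pairing: flipping a
pair changes both the sign and one entry by `-1` since `M` is skew, and permuting the pairs is even.
As `pfSet` contains exactly one permutation of each coset, left multiplication by `τ` permutes the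
terms. The Pfaffian is also multiplicative on block-diagonal matrices.

`ψ(X, Y)` is `diag(X, Y)` conjugated by `psiPerm`, a rotation by the even amount `2a`, so of sign
one. Since `ψ` is multiplicative and `J_{2(a+b)} = ψ((-1)^b J_{2a}, J_{2b})`, the matrix `J ψ(A, B)`
is `diag((-1)^b J_{2a} A, J_{2b} B)` conjugated by `psiPerm`, whose Pfaffian is
`((-1)^b)^a θ(A) θ(B)`.
-/

namespace Pfaffian

open Equiv Equiv.Perm Finset

section Pairs

variable {n : ℕ}

def pairEquiv (n : ℕ) : Fin n × Fin 2 ≃ Fin (2 * n) :=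
  finProdFinEquiv.trans (finCongr (Nat.mul_comm n 2))

@[simp]
lemma pairEquiv_apply (i : Fin n) (k : Fin 2) : pairEquiv n (i, k) = pairIdx n i k := by
  ext
  simp [pairEquiv, pairIdx, Nat.add_comm]

lemma pairIdx_val (i : Fin n) (k : Fin 2) : (pairIdx n i k : ℕ) = 2 * i + k := rfl

lemma pairIdx_zero_ne_one (i j : Fin n) : pairIdx n i 0 ≠ pairIdx n j 1 := fun h => by
  have := congrArg Fin.val h
  simp only [pairIdx_val] at this
  omega

lemma exists_pairIdx_eq (x : Fin (2 * n)) : ∃ i k, pairIdx n i k = x := by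
  obtain ⟨⟨i, k⟩, rfl⟩ := (pairEquiv n).surjective x
  exact ⟨i, k, (pairEquiv_apply i k).symm⟩

lemma perm_ext_pairIdx {σ τ : Perm (Fin (2 * n))}
    (h : ∀ i k, σ (pairIdx n i k) = τ (pairIdx n i k)) : σ = τ := by
  ext1 x
  obtain ⟨i, k, rfl⟩ := exists_pairIdx_eq x
  exact h i k

lemma perm_fin_two_eq_one_or_swap (f : Perm (Fin 2)) : f = 1 ∨ f = swap 0 1 := by
  revert f; decide

lemma perm_fin_two_mul_comm (f g : Perm (Fin 2)) : f * g = g * f := by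
  revert f g; decide

def pairFlip (f : Fin n → Perm (Fin 2)) : Perm (Fin (2 * n)) :=
  (pairEquiv n).permCongr (prodCongrRight f)

def pairPerm (π : Perm (Fin n)) : Perm (Fin (2 * n)) :=
  (pairEquiv n).permCongr (prodCongrLeft fun _ => π)

def pairSwap (n : ℕ) : Perm (Fin (2 * n)) :=
  pairFlip fun _ => swap 0 1

@[simp]
lemma pairFlip_apply (f : Fin n → Perm (Fin 2)) (i : Fin n) (k : Fin 2) :
    pairFlip f (pairIdx n i k) = pairIdx n i (f i k) := by
  simp [pairFlip, permCongr_apply, ← pairEquiv_apply]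

@[simp]
lemma pairPerm_apply (π : Perm (Fin n)) (i : Fin n) (k : Fin 2) :
    pairPerm π (pairIdx n i k) = pairIdx n (π i) k := by
  simp [pairPerm, permCongr_apply, ← pairEquiv_apply]

lemma sign_pairFlip (f : Fin n → Perm (Fin 2)) : sign (pairFlip f) = ∏ i, sign (f i) := by
  rw [pairFlip, sign_permCongr, sign_prodCongrRight]

lemma sign_pairPerm (π : Perm (Fin n)) : sign (pairPerm π) = 1 := by
  rw [pairPerm, sign_permCongr, sign_prodCongrLeft, Fin.prod_univ_two, Int.units_mul_self]

lemma commute_pairFlip_pairSwap (f : Fin n → Perm (Fin 2)) : Commute (pairFlip f) (pairSwap n) :=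
  perm_ext_pairIdx fun i k => by
    simpa [pairSwap] using congrArg (pairIdx n i) (Perm.ext_iff.1 (perm_fin_two_mul_comm (f i) _) k)

lemma commute_pairPerm_pairSwap (π : Perm (Fin n)) : Commute (pairPerm π) (pairSwap n) :=
  perm_ext_pairIdx fun i k => by simp [pairSwap]

end Pairs

section PermInvariance

variable {R : Type*} [CommRing R] {n : ℕ}

def pfSet (n : ℕ) : Finset (Perm (Fin (2 * n))) :=
  univ.filter fun σ =>
    (∀ i : Fin n, (σ (pairIdx n i 0)).val < (σ (pairIdx n i 1)).val) ∧
    (∀ i j : Fin n, i < j → (σ (pairIdx n i 0)).val < (σ (pairIdx n j 0)).val)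

lemma mem_pfSet {σ : Perm (Fin (2 * n))} :
    σ ∈ pfSet n ↔ (∀ i, σ (pairIdx n i 0) < σ (pairIdx n i 1)) ∧
      StrictMono fun i => σ (pairIdx n i 0) := by
  simp only [pfSet, mem_filter, mem_univ, true_and, StrictMono, Fin.lt_def]

noncomputable def pfTerm (M : Matrix (Fin (2 * n)) (Fin (2 * n)) R) (σ : Perm (Fin (2 * n))) : R :=
  ((sign σ : ℤ) : R) * ∏ i, M (σ (pairIdx n i 0)) (σ (pairIdx n i 1))

lemma pf_eq_sum_pfTerm (M : Matrix (Fin (2 * n)) (Fin (2 * n)) R) :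
    pf M = ∑ σ ∈ pfSet n, pfTerm M σ := by
  simp only [pf, pfSet, pfTerm, zsmul_eq_mul]

lemma pfTerm_mul_pairPerm (M : Matrix (Fin (2 * n)) (Fin (2 * n)) R) (σ : Perm (Fin (2 * n)))
    (π : Perm (Fin n)) : pfTerm M (σ * pairPerm π) = pfTerm M σ := by
  simp only [pfTerm, Perm.sign_mul, sign_pairPerm, mul_one, Perm.mul_apply, pairPerm_apply]
  rw [Equiv.prod_comp π fun i => M (σ (pairIdx n i 0)) (σ (pairIdx n i 1))]

lemma sign_mul_apply_fin_two (N : Fin 2 → Fin 2 → R) (hN : N 1 0 = -N 0 1) (f : Perm (Fin 2)) :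
    ((sign f : ℤ) : R) * N (f 0) (f 1) = N 0 1 := by
  rcases perm_fin_two_eq_one_or_swap f with rfl | rfl
  · simp
  · simp [hN]

/-- Reversing the orientation of some pairs changes the sign of the permutation and of the
product of entries by the same factor, because `M` is skew. -/
lemma pfTerm_mul_pairFlip {M : Matrix (Fin (2 * n)) (Fin (2 * n)) R} (hM : Mᵀ = -M)
    (σ : Perm (Fin (2 * n))) (f : Fin n → Perm (Fin 2)) :
    pfTerm M (σ * pairFlip f) = pfTerm M σ := by
  have hskew : ∀ x y, M y x = -M x y := fun x y => by simpa using congrFun (congrFun hM x) y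
  simp only [pfTerm, Perm.sign_mul, sign_pairFlip, Units.val_mul, Units.coe_prod, Int.cast_mul,
    Int.cast_prod, Perm.mul_apply, pairFlip_apply, mul_assoc, ← prod_mul_distrib]
  congr 2 with i
  exact sign_mul_apply_fin_two (fun k l => M (σ (pairIdx n i k)) (σ (pairIdx n i l)))
    (hskew _ _) (f i)

def matching (σ : Perm (Fin (2 * n))) : Perm (Fin (2 * n)) :=
  σ * pairSwap n * σ⁻¹

@[simp]
lemma matching_apply_pairIdx_zero (σ : Perm (Fin (2 * n))) (i : Fin n) :
    matching σ (σ (pairIdx n i 0)) = σ (pairIdx n i 1) := by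
  simp [matching, pairSwap]

@[simp]
lemma matching_apply_pairIdx_one (σ : Perm (Fin (2 * n))) (i : Fin n) :
    matching σ (σ (pairIdx n i 1)) = σ (pairIdx n i 0) := by
  simp [matching, pairSwap]

lemma matching_mul_left (τ σ : Perm (Fin (2 * n))) : matching (τ * σ) = τ * matching σ * τ⁻¹ := by
  simp only [matching, _root_.mul_inv_rev, mul_assoc]

lemma matching_mul_of_commute (σ : Perm (Fin (2 * n))) {h : Perm (Fin (2 * n))}
    (hh : Commute h (pairSwap n)) : matching (σ * h) = matching σ := by
  simp only [matching, _root_.mul_inv_rev, mul_assoc, hh.eq]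
  simp

lemma range_eq_of_mem_pfSet {σ : Perm (Fin (2 * n))} (hσ : σ ∈ pfSet n) :
    Set.range (fun i => σ (pairIdx n i 0)) = {x | x < matching σ x} := by
  have horient := (mem_pfSet.1 hσ).1
  ext x
  obtain ⟨i, k, rfl⟩ : ∃ i k, σ (pairIdx n i k) = x := by
    obtain ⟨i, k, h⟩ := exists_pairIdx_eq (σ⁻¹ x)
    exact ⟨i, k, by simp [h]⟩
  fin_cases k
  · simpa using horient i
  · refine iff_of_false ?_ (by simpa using (horient i).asymm)
    rintro ⟨j, hj⟩
    exact pairIdx_zero_ne_one j i (σ.injective hj)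

lemma eq_of_matching_eq {σ ρ : Perm (Fin (2 * n))} (hσ : σ ∈ pfSet n) (hρ : ρ ∈ pfSet n)
    (h : matching σ = matching ρ) : σ = ρ := by
  have hfirst : (fun i => σ (pairIdx n i 0)) = fun i => ρ (pairIdx n i 0) :=
    ((mem_pfSet.1 hσ).2.range_inj (mem_pfSet.1 hρ).2).1
      (by rw [range_eq_of_mem_pfSet hσ, range_eq_of_mem_pfSet hρ, h])
  refine perm_ext_pairIdx fun i k => ?_
  have hi := congrFun hfirst i
  fin_cases k
  · exact hi
  · calc σ (pairIdx n i 1) = matching σ (σ (pairIdx n i 0)) := by simp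
      _ = ρ (pairIdx n i 1) := by simp [h, hi]

/-- Every coset of the stabiliser of the pairing meets `pfSet`: orient each pair increasingly,
then sort the pairs by their first entries. -/
lemma exists_mul_pairFlip_mul_pairPerm_mem_pfSet (σ : Perm (Fin (2 * n))) :
    ∃ f π, σ * pairFlip f * pairPerm π ∈ pfSet n := by
  classical
  let f : Fin n → Perm (Fin 2) := fun i =>
    if σ (pairIdx n i 0) < σ (pairIdx n i 1) then 1 else swap 0 1
  have horient : ∀ i, (σ * pairFlip f) (pairIdx n i 0) < (σ * pairFlip f) (pairIdx n i 1) := by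
    intro i
    by_cases h : σ (pairIdx n i 0) < σ (pairIdx n i 1)
    · simp [f, h]
    · simpa [f, h] using
        lt_of_le_of_ne (not_lt.1 h) (σ.injective.ne (pairIdx_zero_ne_one i i).symm)
  let g : Fin n → Fin (2 * n) := fun i => (σ * pairFlip f) (pairIdx n i 0)
  refine ⟨f, Tuple.sort g, mem_pfSet.2 ⟨fun i => by simpa using horient _, ?_⟩⟩
  have hinj : Function.Injective (g ∘ Tuple.sort g) := fun i j h => by
    have := congrArg Fin.val ((σ * pairFlip f).injective h)
    simp only [pairIdx_val] at this
    exact (Tuple.sort g).injective (Fin.ext (by omega))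
  convert (Tuple.monotone_sort g).strictMono_of_injective hinj using 1
  ext i
  simp [g]

/-- The element of `pfSet n` in the coset of `σ` modulo the stabiliser of the pairing. -/
noncomputable def pfRep (σ : Perm (Fin (2 * n))) : Perm (Fin (2 * n)) :=
  σ * pairFlip (exists_mul_pairFlip_mul_pairPerm_mem_pfSet σ).choose *
    pairPerm (exists_mul_pairFlip_mul_pairPerm_mem_pfSet σ).choose_spec.choose

lemma pfRep_mem_pfSet (σ : Perm (Fin (2 * n))) : pfRep σ ∈ pfSet n :=
  (exists_mul_pairFlip_mul_pairPerm_mem_pfSet σ).choose_spec.choose_spec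

lemma matching_pfRep (σ : Perm (Fin (2 * n))) : matching (pfRep σ) = matching σ := by
  rw [pfRep, matching_mul_of_commute _ (commute_pairPerm_pairSwap _),
    matching_mul_of_commute _ (commute_pairFlip_pairSwap _)]

lemma pfTerm_pfRep {M : Matrix (Fin (2 * n)) (Fin (2 * n)) R} (hM : Mᵀ = -M)
    (σ : Perm (Fin (2 * n))) : pfTerm M (pfRep σ) = pfTerm M σ := by
  rw [pfRep, pfTerm_mul_pairPerm, pfTerm_mul_pairFlip hM]

lemma pfRep_inv_mul_pfRep_mul {σ : Perm (Fin (2 * n))} (hσ : σ ∈ pfSet n) (τ : Perm (Fin (2 * n))) :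
    pfRep (τ⁻¹ * pfRep (τ * σ)) = σ :=
  eq_of_matching_eq (pfRep_mem_pfSet _) hσ (by
    rw [matching_pfRep, matching_mul_left, matching_pfRep, matching_mul_left]
    group)

/-- `σ ↦ pfRep (τ * σ)` permutes `pfSet n`. -/
lemma sum_pfTerm_mul_left {M : Matrix (Fin (2 * n)) (Fin (2 * n)) R} (hM : Mᵀ = -M)
    (τ : Perm (Fin (2 * n))) :
    ∑ σ ∈ pfSet n, pfTerm M (τ * σ) = ∑ σ ∈ pfSet n, pfTerm M σ :=
  sum_nbij' (fun σ => pfRep (τ * σ)) (fun σ => pfRep (τ⁻¹ * σ))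
    (fun _ _ => pfRep_mem_pfSet _) (fun _ _ => pfRep_mem_pfSet _)
    (fun _ hσ => pfRep_inv_mul_pfRep_mul hσ τ)
    (fun σ hσ => by simpa using pfRep_inv_mul_pfRep_mul hσ τ⁻¹)
    (fun σ _ => (pfTerm_pfRep hM _).symm)

theorem pf_submatrix_perm {M : Matrix (Fin (2 * n)) (Fin (2 * n)) R} (hM : Mᵀ = -M)
    (τ : Perm (Fin (2 * n))) : pf (M.submatrix τ τ) = ((sign τ : ℤ) : R) * pf M := by
  rw [pf_eq_sum_pfTerm, pf_eq_sum_pfTerm, ← sum_pfTerm_mul_left hM τ, mul_sum]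
  refine sum_congr rfl fun σ _ => ?_
  simp only [pfTerm, Matrix.submatrix_apply, Perm.mul_apply, Perm.sign_mul, Units.val_mul,
    Int.cast_mul]
  rcases Int.units_eq_one_or (sign τ) with h | h <;> simp [h]

lemma pf_smul (c : R) (M : Matrix (Fin (2 * n)) (Fin (2 * n)) R) :
    pf (c • M) = c ^ n * pf M := by
  simp only [pf_eq_sum_pfTerm, pfTerm, mul_sum, Matrix.smul_apply, smul_eq_mul, prod_mul_distrib,
    prod_const, card_univ, Fintype.card_fin]
  exact sum_congr rfl fun _ _ => by ring

end PermInvariance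

section BlockDiagonal

variable {R : Type*} [CommRing R] {a b : ℕ}

def NoPairStraddles {n : ℕ} (c : ℕ) (σ : Perm (Fin (2 * n))) : Prop :=
  ∀ i, (σ (pairIdx n i 0) : ℕ) < c ↔ (σ (pairIdx n i 1) : ℕ) < c

def blockSumEquiv (a b : ℕ) : Fin (2 * a) ⊕ Fin (2 * b) ≃ Fin (2 * (a + b)) :=
  finSumFinEquiv.trans (finCongr (Nat.mul_add 2 a b).symm)

@[simp]
lemma blockSumEquiv_inl_val (u : Fin (2 * a)) : (blockSumEquiv a b (Sum.inl u) : ℕ) = u := rfl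

@[simp]
lemma blockSumEquiv_inr_val (v : Fin (2 * b)) :
    (blockSumEquiv a b (Sum.inr v) : ℕ) = 2 * a + v := rfl

lemma pairIdx_castAdd (i : Fin a) (k : Fin 2) :
    pairIdx (a + b) (Fin.castAdd b i) k = blockSumEquiv a b (Sum.inl (pairIdx a i k)) := rfl

lemma pairIdx_natAdd (i : Fin b) (k : Fin 2) :
    pairIdx (a + b) (Fin.natAdd a i) k = blockSumEquiv a b (Sum.inr (pairIdx b i k)) := by
  ext
  simp only [pairIdx_val, blockSumEquiv_inr_val, Fin.val_natAdd]
  ring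

def blockPerm (α : Perm (Fin (2 * a))) (β : Perm (Fin (2 * b))) : Perm (Fin (2 * (a + b))) :=
  (blockSumEquiv a b).permCongr (Perm.sumCongr α β)

variable (α : Perm (Fin (2 * a))) (β : Perm (Fin (2 * b)))

@[simp]
lemma blockPerm_apply_inl (u : Fin (2 * a)) :
    blockPerm α β (blockSumEquiv a b (Sum.inl u)) = blockSumEquiv a b (Sum.inl (α u)) := by
  simp [blockPerm, permCongr_apply]

@[simp]
lemma blockPerm_apply_inr (v : Fin (2 * b)) :
    blockPerm α β (blockSumEquiv a b (Sum.inr v)) = blockSumEquiv a b (Sum.inr (β v)) := by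
  simp [blockPerm, permCongr_apply]

lemma blockPerm_mem_pfSet_iff : blockPerm α β ∈ pfSet (a + b) ↔ α ∈ pfSet a ∧ β ∈ pfSet b := by
  simp only [mem_pfSet, StrictMono, Fin.lt_def]
  constructor
  · rintro ⟨h1, h2⟩
    refine ⟨⟨fun i => ?_, fun i j hij => ?_⟩, ⟨fun i => ?_, fun i j hij => ?_⟩⟩
    · simpa [pairIdx_castAdd] using h1 (Fin.castAdd b i)
    · simpa [pairIdx_castAdd] using @h2 (Fin.castAdd b i) (Fin.castAdd b j) hij
    · simpa [pairIdx_natAdd] using h1 (Fin.natAdd a i)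
    · simpa [pairIdx_natAdd] using @h2 (Fin.natAdd a i) (Fin.natAdd a j) (by simpa using hij)
  · rintro ⟨⟨h1, h2⟩, ⟨h3, h4⟩⟩
    refine ⟨fun i => ?_, fun i j hij => ?_⟩
    · induction i using Fin.addCases <;> simp [pairIdx_castAdd, pairIdx_natAdd, h1, h3]
    · induction i using Fin.addCases <;> induction j using Fin.addCases <;>
        simp only [pairIdx_castAdd, pairIdx_natAdd, blockPerm_apply_inl, blockPerm_apply_inr,
          blockSumEquiv_inl_val, blockSumEquiv_inr_val] at hij ⊢
      · exact h2 (by simpa using hij)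
      · omega
      · simp at hij; omega
      · have := h4 (by simpa using hij : _ < _); omega

lemma sign_blockPerm :
    sign (blockPerm α β) = sign α * sign β := by
  rw [blockPerm, sign_permCongr, sign_sumCongr]

variable (X : Matrix (Fin (2 * a)) (Fin (2 * a)) R) (Y : Matrix (Fin (2 * b)) (Fin (2 * b)) R)

lemma pfTerm_blockPerm :
    pfTerm (reindex (blockSumEquiv a b) (blockSumEquiv a b) (fromBlocks X 0 0 Y)) (blockPerm α β)
      = pfTerm X α * pfTerm Y β := by
  simp only [pfTerm, sign_blockPerm, Fin.prod_univ_add, pairIdx_castAdd, pairIdx_natAdd,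
    blockPerm_apply_inl, blockPerm_apply_inr, reindex_apply, submatrix_apply, symm_apply_apply,
    fromBlocks_apply₁₁, fromBlocks_apply₂₂, Units.val_mul, Int.cast_mul]
  ring

lemma reindex_fromBlocks_apply_eq_zero {x y : Fin (2 * (a + b))}
    (hxy : ¬((x : ℕ) < 2 * a ↔ (y : ℕ) < 2 * a)) :
    reindex (blockSumEquiv a b) (blockSumEquiv a b) (fromBlocks X 0 0 Y) x y = 0 := by
  obtain ⟨x, rfl⟩ := (blockSumEquiv a b).surjective x
  obtain ⟨y, rfl⟩ := (blockSumEquiv a b).surjective y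
  rcases x with x | x <;> rcases y with y | y <;> simp at hxy ⊢

lemma pfTerm_eq_zero_of_pair_straddles {σ : Perm (Fin (2 * (a + b)))} {i : Fin (a + b)}
    (hi : ¬((σ (pairIdx _ i 0) : ℕ) < 2 * a ↔ (σ (pairIdx _ i 1) : ℕ) < 2 * a)) :
    pfTerm (reindex (blockSumEquiv a b) (blockSumEquiv a b) (fromBlocks X 0 0 Y)) σ = 0 := by
  rw [pfTerm, prod_eq_zero (mem_univ i) (reindex_fromBlocks_apply_eq_zero X Y hi), mul_zero]

variable {X Y}

lemma transpose_reindex_fromBlocks (hX : Xᵀ = -X) (hY : Yᵀ = -Y) :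
    (reindex (blockSumEquiv a b) (blockSumEquiv a b) (fromBlocks X 0 0 Y))ᵀ
      = -reindex (blockSumEquiv a b) (blockSumEquiv a b) (fromBlocks X 0 0 Y) := by
  have hneg : fromBlocks (-X) 0 0 (-Y) = -fromBlocks X 0 0 Y := by simp [fromBlocks_neg]
  rw [transpose_reindex, fromBlocks_transpose, hX, hY, transpose_zero, transpose_zero, hneg]
  rfl

/-- The pairs of `σ` landing in `[0, 2a)` are the first `a`: there are `a` of them by counting,
and they come first by monotonicity. -/
lemma val_lt_iff_of_noPairStraddles {σ : Perm (Fin (2 * (a + b)))} (hσ : σ ∈ pfSet (a + b))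
    (hsplit : NoPairStraddles (2 * a) σ) (i : Fin (a + b)) : (i : ℕ) < a ↔ (σ (pairIdx _ i 0) : ℕ) < 2 * a := by
  set S := univ.filter fun i : Fin (a + b) => (σ (pairIdx _ i 0) : ℕ) < 2 * a
  have hcard : #S = a := by
    have h := card_equiv ((pairEquiv (a + b)).trans σ) (s := S ×ˢ univ)
      (t := univ.filter fun x : Fin (2 * (a + b)) => (x : ℕ) < 2 * a) fun ⟨i, k⟩ => by
        fin_cases k <;> simp [S, hsplit i]
    rw [card_product, card_univ, Fintype.card_fin, Fin.card_filter_val_lt] at h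
    omega
  have h := Fin.lt_card_filter_univ_iff_apply_of_imp (j := i)
    (fun i : Fin (a + b) => (σ (pairIdx _ i 0) : ℕ) < 2 * a) fun i j hji hi =>
      lt_of_le_of_lt (Fin.le_def.1 ((mem_pfSet.1 hσ).2.monotone hji)) hi
  rwa [hcard] at h

lemma exists_blockPerm_eq {σ : Perm (Fin (2 * (a + b)))} (hσ : σ ∈ pfSet (a + b))
    (hsplit : NoPairStraddles (2 * a) σ) :
    ∃ α β, blockPerm α β = σ := by
  have hlow : ∀ x : Fin (2 * (a + b)), (x : ℕ) < 2 * a → (σ x : ℕ) < 2 * a := by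
    intro x hx
    obtain ⟨i, k, rfl⟩ := exists_pairIdx_eq x
    have hi : (i : ℕ) < a := by
      have := k.isLt
      rw [pairIdx_val] at hx
      omega
    fin_cases k
    · exact (val_lt_iff_of_noPairStraddles hσ hsplit i).1 hi
    · exact (hsplit i).1 ((val_lt_iff_of_noPairStraddles hσ hsplit i).1 hi)
  let e := blockSumEquiv a b
  have hmaps : Set.MapsTo (e.symm.permCongr σ) (Set.range Sum.inl) (Set.range Sum.inl) := by
    rintro _ ⟨u, rfl⟩
    have hu := hlow (e (Sum.inl u)) u.isLt
    exact ⟨⟨_, hu⟩, e.injective (Fin.ext (by simp [e, permCongr_apply]))⟩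
  obtain ⟨⟨α, β⟩, hαβ⟩ := mem_sumCongrHom_range_of_perm_mapsTo_inl hmaps
  refine ⟨α, β, ?_⟩
  rw [Perm.sumCongrHom_apply] at hαβ
  rw [blockPerm, hαβ]
  ext x
  simp [e, permCongr_apply]

lemma blockPerm_injective :
    Function.Injective fun q : Perm (Fin (2 * a)) × Perm (Fin (2 * b)) => blockPerm q.1 q.2 :=
  ((blockSumEquiv a b).permCongr).injective.comp sumCongrHom_injective

variable (X Y)

theorem pf_reindex_fromBlocks :
    pf (reindex (blockSumEquiv a b) (blockSumEquiv a b) (fromBlocks X 0 0 Y)) = pf X * pf Y := by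
  classical
  rw [pf_eq_sum_pfTerm, pf_eq_sum_pfTerm, pf_eq_sum_pfTerm, sum_mul_sum, ← sum_product']
  simp_rw [← pfTerm_blockPerm]
  rw [← sum_image blockPerm_injective.injOn]
  refine (sum_subset (fun σ hσ => ?_) fun σ hσ hσ' => ?_).symm
  · obtain ⟨⟨α, β⟩, hαβ, rfl⟩ := mem_image.1 hσ
    exact (blockPerm_mem_pfSet_iff α β).2 (mem_product.1 hαβ)
  · by_cases hsplit : NoPairStraddles (2 * a) σ
    · obtain ⟨α, β, rfl⟩ := exists_blockPerm_eq hσ hsplit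
      exact absurd (mem_image.2 ⟨(α, β), mem_product.2 ((blockPerm_mem_pfSet_iff α β).1 hσ), rfl⟩)
        hσ'
    · obtain ⟨i, hi⟩ := not_forall.1 hsplit
      exact pfTerm_eq_zero_of_pair_straddles X Y hi

end BlockDiagonal

section JForm

variable {F : Type*} [Field F]

lemma Jmat_apply (m : ℕ) (x y : Fin (2 * m)) :
    Jmat F m x y = if (x : ℕ) + y = 2 * m - 1 then (-1 : F) ^ min (x : ℕ) y / 2 else 0 := by
  simp only [Jmat, of_apply]
  split_ifs <;> first | rfl | rw [min_eq_left (by omega)] | rw [min_eq_right (by omega)]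

lemma Jmat_transpose (m : ℕ) : (Jmat F m)ᵀ = Jmat F m := by
  ext x y
  simp only [transpose_apply, Jmat_apply, add_comm (x : ℕ), min_comm (x : ℕ)]

lemma transpose_Jmat_mul {m : ℕ} {A : Matrix (Fin (2 * m)) (Fin (2 * m)) F}
    (hA : Aᵀ * Jmat F m + Jmat F m * A = 0) : (Jmat F m * A)ᵀ = -(Jmat F m * A) := by
  rw [transpose_mul, Jmat_transpose, eq_neg_of_add_eq_zero_left hA]

end JForm

section Embedding

lemma coe_finRotate_pow {N : ℕ} (k : ℕ) (u : Fin N) : ((finRotate N ^ k) u : ℕ) = (u + k) % N := by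
  induction k with
  | zero => simp [Nat.mod_eq_of_lt u.isLt]
  | succ k ih =>
    have := u.neZero
    rw [pow_succ', Perm.mul_apply, finRotate_apply, Fin.val_add, ih, Fin.val_one', Nat.add_mod_mod,
      Nat.mod_add_mod, Nat.add_assoc]

variable (a b : ℕ)

/-- Rotation by `2a` of the first `2a + b` indices: it carries the positions used by `psi` (the
first block in the middle, the second one split between the two corners) to the block-diagonal
positions. -/
def psiPerm : Perm (Fin (2 * (a + b))) :=
  (finSumFinEquiv.trans (finCongr (by ring))).permCongr
    (Perm.sumCongr (finRotate (2 * a + b) ^ (2 * a)) (1 : Perm (Fin b)))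

lemma sign_psiPerm : sign (psiPerm a b) = 1 := by
  rw [psiPerm, sign_permCongr, sign_sumCongr, map_pow, pow_mul, Int.units_sq, one_pow, map_one,
    mul_one]

def psiEquiv : Fin (2 * a) ⊕ Fin (2 * b) ≃ Fin (2 * (a + b)) :=
  (blockSumEquiv a b).trans (psiPerm a b).symm

variable {a b}

lemma psiPerm_apply_val (x : Fin (2 * (a + b))) : (psiPerm a b x : ℕ) =
    if (x : ℕ) < b then x + 2 * a else if (x : ℕ) < 2 * a + b then x - b else x := by
  obtain ⟨y, rfl⟩ :=
    (finSumFinEquiv.trans (finCongr (by ring : 2 * a + b + b = 2 * (a + b)))).surjective x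
  rw [psiPerm, permCongr_apply, symm_apply_apply]
  rcases y with u | v
  · have hu := u.isLt
    simp only [trans_apply, Perm.sumCongr_apply, Sum.map_inl, finSumFinEquiv_apply_left,
      finCongr_apply, Fin.val_cast, Fin.val_castAdd, coe_finRotate_pow]
    split_ifs
    · exact Nat.mod_eq_of_lt (by omega)
    · rw [Nat.mod_eq_sub_mod (by omega), Nat.mod_eq_of_lt (by omega)]
      omega
  · simp only [trans_apply, Perm.sumCongr_apply, Sum.map_inr, finSumFinEquiv_apply_right,
      finCongr_apply, Fin.val_cast, Fin.val_natAdd, Perm.coe_one, id_eq]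
    split_ifs <;> omega

lemma psiEquiv_eq_iff {w : Fin (2 * a) ⊕ Fin (2 * b)} {x : Fin (2 * (a + b))} :
    psiEquiv a b w = x ↔ blockSumEquiv a b w = psiPerm a b x := by
  rw [psiEquiv, trans_apply, symm_apply_eq]

@[simp]
lemma psiEquiv_inl_val (u : Fin (2 * a)) : (psiEquiv a b (Sum.inl u) : ℕ) = b + u := by
  have hx : b + (u : ℕ) < 2 * (a + b) := by omega
  rw [show psiEquiv a b (Sum.inl u) = ⟨b + u, hx⟩ from psiEquiv_eq_iff.2 (Fin.ext ?_)]
  rw [psiPerm_apply_val]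
  simp only [blockSumEquiv_inl_val]
  split_ifs <;> omega

@[simp]
lemma psiEquiv_inr_val (v : Fin (2 * b)) :
    (psiEquiv a b (Sum.inr v) : ℕ) = if (v : ℕ) < b then (v : ℕ) else (v : ℕ) + 2 * a := by
  have hx : (if (v : ℕ) < b then (v : ℕ) else (v : ℕ) + 2 * a) < 2 * (a + b) := by
    split_ifs <;> omega
  rw [show psiEquiv a b (Sum.inr v) = ⟨_, hx⟩ from psiEquiv_eq_iff.2 (Fin.ext ?_)]
  rw [psiPerm_apply_val]
  simp only [blockSumEquiv_inr_val]
  split_ifs <;> omega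

lemma reindex_psi {F : Type*} [Field F] (X : Matrix (Fin (2 * a)) (Fin (2 * a)) F)
    (Y : Matrix (Fin (2 * b)) (Fin (2 * b)) F) :
    reindex (finCongr (by ring)) (finCongr (by ring)) (psi a b X Y)
      = reindex (psiEquiv a b) (psiEquiv a b) (fromBlocks X 0 0 Y) := by
  ext x y
  obtain ⟨w, rfl⟩ := (psiEquiv a b).surjective x
  obtain ⟨w', rfl⟩ := (psiEquiv a b).surjective y
  simp only [reindex_apply, submatrix_apply, symm_apply_apply, finCongr_symm, finCongr_apply, psi,
    of_apply, Fin.val_cast]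
  rcases w with u | v <;> rcases w' with u' | v' <;>
    simp only [psiEquiv_inl_val, psiEquiv_inr_val, fromBlocks_apply₁₁, fromBlocks_apply₁₂,
      fromBlocks_apply₂₁, fromBlocks_apply₂₂, Matrix.zero_apply] <;>
    split_ifs <;>
    first | omega | rfl | (congr 1 <;> apply Fin.ext <;> simp only <;> (try split_ifs) <;> omega)

lemma Jmat_add_eq_reindex {F : Type*} [Field F] :
    Jmat F (a + b) = reindex (psiEquiv a b) (psiEquiv a b)
      (fromBlocks ((-1 : F) ^ b • Jmat F a) 0 0 (Jmat F b)) := by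
  ext x y
  obtain ⟨w, rfl⟩ := (psiEquiv a b).surjective x
  obtain ⟨w', rfl⟩ := (psiEquiv a b).surjective y
  rw [reindex_apply, submatrix_apply, symm_apply_apply, symm_apply_apply, Jmat_apply]
  rcases w with u | v <;> rcases w' with u' | v' <;>
    simp only [psiEquiv_inl_val, psiEquiv_inr_val, fromBlocks_apply₁₁, fromBlocks_apply₁₂,
      fromBlocks_apply₂₁, fromBlocks_apply₂₂, Matrix.zero_apply, Matrix.smul_apply, smul_eq_mul,
      Jmat_apply] <;>
    split_ifs <;>
    first | omega | rfl | (congr 2; omega) | simp [Nat.add_min_add_left, pow_add, mul_div_assoc]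

lemma reindex_psiEquiv {R : Type*}
    (M : Matrix (Fin (2 * a) ⊕ Fin (2 * b)) (Fin (2 * a) ⊕ Fin (2 * b)) R) :
    reindex (psiEquiv a b) (psiEquiv a b) M
      = (reindex (blockSumEquiv a b) (blockSumEquiv a b) M).submatrix (psiPerm a b) (psiPerm a b) :=
  rfl

end Embedding

end Pfaffian

open Pfaffian

/-- For `X ∈ so(2m,F)` let `θ(X) = pf(J_{2m} X)`.  Then for the block embedding `ψ`,
`θ(ψ(A,B)) = (−1)^{ab} · θ(A) · θ(B)`. -/
theorem theta_psi {F : Type*} [Field F] (a b : ℕ)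
    (A : Matrix (Fin (2 * a)) (Fin (2 * a)) F)
    (B : Matrix (Fin (2 * b)) (Fin (2 * b)) F)
    (hA : Aᵀ * Jmat F a + Jmat F a * A = 0)
    (hB : Bᵀ * Jmat F b + Jmat F b * B = 0) :
    pf (Jmat F (a + b) *
        Matrix.reindex (finCongr (by ring)) (finCongr (by ring)) (psi a b A B))
      = (-1 : F) ^ (a * b) * pf (Jmat F a * A) * pf (Jmat F b * B) := by
  have hblocks : Jmat F (a + b) * reindex (finCongr (by ring)) (finCongr (by ring)) (psi a b A B)
      = reindex (psiEquiv a b) (psiEquiv a b)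
          (fromBlocks ((-1 : F) ^ b • (Jmat F a * A)) 0 0 (Jmat F b * B)) := by
    rw [reindex_psi, Jmat_add_eq_reindex]
    simp only [reindex_apply, submatrix_mul_equiv, fromBlocks_multiply, smul_mul_assoc]
    simp
  have hskew := transpose_reindex_fromBlocks (X := (-1 : F) ^ b • (Jmat F a * A))
    (by rw [transpose_smul, transpose_Jmat_mul hA, smul_neg]) (transpose_Jmat_mul hB)
  rw [hblocks, reindex_psiEquiv, pf_submatrix_perm hskew, sign_psiPerm, pf_reindex_fromBlocks,
    pf_smul, ← pow_mul, mul_comm b a]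
  simp [mul_assoc]
end
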